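/- arXiv:2110.09275 — 5 statements merged into one kernel-verified Lean document; each statement's English description precedes it below -/
import Mathlib

section
/- Let (Ω, 𝒜, P) be a probability space, X : Ω → ℝ^k, Y : Ω → ℝ Borel-measurable random variables and R : Ω → {0,1} a measurable indicator. Suppose (i) Y and R are conditionally independent given the σ-algebra σ(X) generated by X (unconfoundedness), and (ii) f : ℝ^k → ℝ is Borel-measurable and f ∘ X is a version of the conditional expectation E[1{R=1} | σ(X)] (f is the true propensity score). Then for every Borel-measurable function h : ℝ^k → ℝ, the random variables Y and R are conditionally independent given the σ-algebra σ(f∘X, h∘X) generated by the pair (f(X), h(X)). -/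
open MeasureTheory ProbabilityTheory Filter

/-!
Write `𝒢 = σ(f(X), h(X)) ≤ σ(X)`. Since `P(R = 1 | σ(X)) = f(X)` is already `𝒢`-measurable,
every conditional probability `P(R ∈ t | σ(X))` of the binary `R`, being an affine function of it,
is `𝒢`-measurable, hence equal to `P(R ∈ t | 𝒢)`. Conditioning the factorisation given `σ(X)` down to `𝒢` and pulling out this
bounded `𝒢`-measurable factor yields the factorisation given `𝒢`.
-/

namespace ProbabilityTheory

variable {Ω : Type*} {𝒢 𝔪 mΩ : MeasurableSpace Ω} {μ : Measure Ω}

lemma ae_abs_condExp_indicator_le_one (s : Set Ω) : ∀ᵐ ω ∂μ, |(μ⟦s | 𝔪⟧) ω| ≤ 1 :=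
  ae_bdd_abs_condExp_of_ae_bdd_abs (R := (1 : ℝ)) <| ae_of_all _ fun ω => by
    by_cases hω : ω ∈ s <;> simp [hω]

lemma condExp_ae_eq_condExp_of_aestronglyMeasurable [IsFiniteMeasure μ] {f : Ω → ℝ}
    (h𝒢 : 𝒢 ≤ 𝔪) (h𝔪 : 𝔪 ≤ mΩ)
    (hf : AEStronglyMeasurable[𝒢] (μ[f | 𝔪]) μ) : μ[f | 𝒢] =ᵐ[μ] μ[f | 𝔪] :=
  (condExp_condExp_of_le h𝒢 h𝔪).symm.trans
    (condExp_of_aestronglyMeasurable' (h𝒢.trans h𝔪) hf integrable_condExp)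

theorem CondIndepFun.of_le_of_aestronglyMeasurable_condExp [StandardBorelSpace Ω]
    [IsFiniteMeasure μ] {β β' : Type*} [MeasurableSpace β] [MeasurableSpace β'] {Y : Ω → β} {R : Ω → β'}
    (hY : Measurable Y) (hR : Measurable R) (h𝒢 : 𝒢 ≤ 𝔪) (h𝔪 : 𝔪 ≤ mΩ)
    (hind : CondIndepFun 𝔪 h𝔪 Y R μ)
    (hR𝒢 : ∀ t, MeasurableSet t → AEStronglyMeasurable[𝒢] (μ⟦R ⁻¹' t | 𝔪⟧) μ) :
    CondIndepFun 𝒢 (h𝒢.trans h𝔪) Y R μ := by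
  rw [condIndepFun_iff_condExp_inter_preimage_eq_mul hY hR] at hind ⊢
  intro s t hs ht
  have hB : μ⟦R ⁻¹' t | 𝒢⟧ =ᵐ[μ] μ⟦R ⁻¹' t | 𝔪⟧ :=
    condExp_ae_eq_condExp_of_aestronglyMeasurable h𝒢 h𝔪 (hR𝒢 t ht)
  have hB_bound : ∀ᵐ ω ∂μ, ‖(μ⟦R ⁻¹' t | 𝒢⟧) ω‖ ≤ 1 := ae_abs_condExp_indicator_le_one _
  calc μ⟦Y ⁻¹' s ∩ R ⁻¹' t | 𝒢⟧
      =ᵐ[μ] μ[μ⟦Y ⁻¹' s ∩ R ⁻¹' t | 𝔪⟧ | 𝒢] := (condExp_condExp_of_le h𝒢 h𝔪).symm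
    _ =ᵐ[μ] μ[μ⟦R ⁻¹' t | 𝒢⟧ * μ⟦Y ⁻¹' s | 𝔪⟧ | 𝒢] := by
      refine condExp_congr_ae ((hind s t hs ht).trans ?_)
      filter_upwards [hB] with ω hω
      simp [hω, mul_comm]
    _ =ᵐ[μ] μ⟦R ⁻¹' t | 𝒢⟧ * μ[μ⟦Y ⁻¹' s | 𝔪⟧ | 𝒢] :=
      condExp_stronglyMeasurable_mul_of_bound (h𝒢.trans h𝔪) stronglyMeasurable_condExp
        integrable_condExp 1 hB_bound
    _ =ᵐ[μ] fun ω => (μ⟦Y ⁻¹' s | 𝒢⟧) ω * (μ⟦R ⁻¹' t | 𝒢⟧) ω := by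
      filter_upwards [condExp_condExp_of_le (f := (Y ⁻¹' s).indicator fun _ => (1 : ℝ))
        h𝒢 h𝔪] with ω hω
      simp [hω, mul_comm]

section Binary

variable {R : Ω → ℝ}

lemma comp_eq_const_add_smul_indicator_of_forall_eq_zero_or_one
    (hR01 : ∀ ω, R ω = 0 ∨ R ω = 1) (g : ℝ → ℝ) :
    g ∘ R = (fun _ => g 0) + (g 1 - g 0) • {ω | R ω = 1}.indicator fun _ => (1 : ℝ) := by
  funext ω
  rcases hR01 ω with hω | hω <;> simp [hω]

lemma aestronglyMeasurable_condExp_preimage_of_forall_eq_zero_or_one [IsFiniteMeasure μ]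
    (h𝔪 : 𝔪 ≤ mΩ) (hR : Measurable R) (hR01 : ∀ ω, R ω = 0 ∨ R ω = 1)
    (hR1 : AEStronglyMeasurable[𝒢] (μ⟦{ω | R ω = 1} | 𝔪⟧) μ) (t : Set ℝ) :
    AEStronglyMeasurable[𝒢] (μ⟦R ⁻¹' t | 𝔪⟧) μ := by
  have hR1_int : Integrable ({ω | R ω = 1}.indicator fun _ => (1 : ℝ)) μ :=
    (integrable_const 1).indicator (hR (measurableSet_singleton 1))
  set g := t.indicator fun _ => (1 : ℝ)
  have hg : (R ⁻¹' t).indicator (fun _ => (1 : ℝ)) = g ∘ R := by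
    funext ω
    exact Set.indicator_comp_right (g := fun _ => (1 : ℝ)) R
  rw [hg, comp_eq_const_add_smul_indicator_of_forall_eq_zero_or_one hR01 g]
  refine ((aestronglyMeasurable_const (b := g 0)).add (hR1.const_smul (g 1 - g 0))).congr ?_
  refine EventuallyEq.symm ((condExp_add (integrable_const _) (hR1_int.smul _) 𝔪).trans ?_)
  rw [condExp_const h𝔪]
  exact EventuallyEq.rfl.add (condExp_smul _ _ _)

end Binary

end ProbabilityTheory

theorem condIndepFun_given_propensity_score_and_arbitrary_function_general
    {Ω : Type*} {mΩ : MeasurableSpace Ω} [StandardBorelSpace Ω]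
    (μ : Measure Ω) [IsProbabilityMeasure μ]
    {k : ℕ} (X : Ω → (Fin k → ℝ)) (Y : Ω → ℝ) (R : Ω → ℝ)
    (hX : Measurable X) (hY : Measurable Y) (hR : Measurable R)
    (hR01 : ∀ ω, R ω = 0 ∨ R ω = 1)
    (hunconf : CondIndepFun (MeasurableSpace.comap X inferInstance) hX.comap_le Y R μ)
    (f : (Fin k → ℝ) → ℝ) (hf : Measurable f)
    (hprop : (fun ω => f (X ω)) =ᵐ[μ]
      μ[Set.indicator {ω | R ω = 1} (fun _ => (1 : ℝ)) |
        MeasurableSpace.comap X inferInstance])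
    (h : (Fin k → ℝ) → ℝ) (hh : Measurable h) :
    CondIndepFun (MeasurableSpace.comap (fun ω => (f (X ω), h (X ω))) inferInstance)
      (((hf.comp hX).prodMk (hh.comp hX)).comap_le) Y R μ := by
  set 𝒢 := MeasurableSpace.comap (fun ω => (f (X ω), h (X ω))) inferInstance
  have h𝒢 : 𝒢 ≤ MeasurableSpace.comap X inferInstance :=
    ((hf.prodMk hh).comp (comap_measurable X)).comap_le
  have hfX : AEStronglyMeasurable[𝒢] (fun ω => f (X ω)) μ :=
    (measurable_fst.comp (comap_measurable _)).aestronglyMeasurable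
  exact hunconf.of_le_of_aestronglyMeasurable_condExp hY hR h𝒢 hX.comap_le fun t _ =>
    aestronglyMeasurable_condExp_preimage_of_forall_eq_zero_or_one hX.comap_le hR hR01
      (hfX.congr hprop) t

/-- **Propensity-score half of Lemma 1 (double robustness of Double Score Matching)**:
if `Y` and the sample-membership indicator `R` are conditionally independent given
`σ(X)` (unconfoundedness), and `f ∘ X` is a version of the conditional expectation
`E[1{R = 1} | σ(X)]` (i.e. `f` is the true propensity score), then for every Borel
function `h`, `Y` and `R` are conditionally independent given `σ(f(X), h(X))`. -/
theorem condIndepFun_given_propensity_score_and_arbitrary_function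
    {Ω : Type*} {mΩ : MeasurableSpace Ω} [StandardBorelSpace Ω] [Nonempty Ω]
    (μ : Measure Ω) [IsProbabilityMeasure μ]
    {k : ℕ} (X : Ω → (Fin k → ℝ)) (Y : Ω → ℝ) (R : Ω → ℝ)
    (hX : Measurable X) (hY : Measurable Y) (hR : Measurable R)
    (hR01 : ∀ ω, R ω = 0 ∨ R ω = 1)
    (hunconf : CondIndepFun (MeasurableSpace.comap X inferInstance) hX.comap_le Y R μ)
    (f : (Fin k → ℝ) → ℝ) (hf : Measurable f)
    (hprop : (fun ω => f (X ω)) =ᵐ[μ]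
      μ[Set.indicator {ω | R ω = 1} (fun _ => (1 : ℝ)) |
        MeasurableSpace.comap X inferInstance])
    (h : (Fin k → ℝ) → ℝ) (hh : Measurable h) :
    CondIndepFun (MeasurableSpace.comap (fun ω => (f (X ω), h (X ω))) inferInstance)
      (((hf.comp hX).prodMk (hh.comp hX)).comap_le) Y R μ :=
  condIndepFun_given_propensity_score_and_arbitrary_function_general (mΩ := mΩ) μ X Y R hX hY hR
    hR01 hunconf f hf hprop h hh
end

section
/- Let (Ω, 𝒜, P) be a probability space, X : Ω → ℝ^k, Y : Ω → ℝ Borel-measurable random variables and R : Ω → {0,1} a measurable indicator. Suppose (i) Y and R are conditionally independent given σ(X) (unconfoundedness), and (ii) g : ℝ^k → ℝ is Borel-measurable and Y and X are conditionally independent given the σ-algebra σ(g∘X) (g is a valid prognostic score in the sense of Hansen: the conditional law of Y given X depends on X only through g(X)). Then for every Borel-measurable function h : ℝ^k → ℝ, the random variables Y and R are conditionally independent given the σ-algebra σ(g∘X, h∘X). -/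
/-!
Because `g(X)` is a prognostic score, `P(Y ∈ A | X) = P(Y ∈ A | g(X))` almost surely. Take the
unconfoundedness factorisation `P(Y ∈ A, R ∈ B | X) = P(Y ∈ A | X) P(R ∈ B | X)` and condition it
down to the intermediate σ-algebra `σ(g(X), h(X))` by the tower property: the first factor is
`σ(g(X))`-measurable, so it pulls out, and what remains is the factorisation given
`σ(g(X), h(X))`.
-/

open MeasureTheory ProbabilityTheory

section

variable {Ω : Type*} {m₀ m m' m₁ m₂ mΩ : MeasurableSpace Ω} {μ : Measure Ω} [IsFiniteMeasure μ]

theorem condExp_ae_eq_mul_condExp_of_le (hmm' : m ≤ m') (hm' : m' ≤ mΩ) {c f g : Ω → ℝ}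
    (hc : StronglyMeasurable[m] c) (hfg : μ[f | m'] =ᵐ[μ] c * μ[g | m']) :
    μ[f | m] =ᵐ[μ] c * μ[g | m] := by
  have hcg : Integrable (c * μ[g | m']) μ := integrable_condExp.congr hfg
  calc μ[f | m] =ᵐ[μ] μ[μ[f | m'] | m] := (condExp_condExp_of_le hmm' hm').symm
    _ =ᵐ[μ] μ[c * μ[g | m'] | m] := condExp_congr_ae hfg
    _ =ᵐ[μ] c * μ[μ[g | m'] | m] :=
        condExp_mul_of_stronglyMeasurable_left hc hcg integrable_condExp
    _ =ᵐ[μ] c * μ[g | m] := (condExp_condExp_of_le hmm' hm').mul_left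

theorem setIntegral_eq_integral_mul_condExp_indicator {c : Ω → ℝ} (hm₀ : m₀ ≤ mΩ)
    (hc : StronglyMeasurable[m₀] c) (hci : Integrable c μ) {t : Set Ω} (ht : MeasurableSet t) :
    ∫ x in t, c x ∂μ = ∫ x, c x * (μ⟦t | m₀⟧) x ∂μ := by
  have hct : t.indicator c = c * t.indicator 1 := by
    ext x; by_cases hx : x ∈ t <;> simp [hx]
  have hcti : Integrable (c * t.indicator 1) μ := hct ▸ hci.indicator ht
  calc ∫ x in t, c x ∂μ = ∫ x, (c * t.indicator 1 : Ω → ℝ) x ∂μ := by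
        rw [← hct, integral_indicator ht]
    _ = ∫ x, (μ[c * t.indicator 1 | m₀]) x ∂μ := (integral_condExp hm₀).symm
    _ = ∫ x, c x * (μ⟦t | m₀⟧) x ∂μ := integral_congr_ae
          (condExp_mul_of_stronglyMeasurable_left hc hcti ((integrable_const 1).indicator ht))

variable [StandardBorelSpace Ω]

theorem CondIndep.condExp_indicator_ae_eq_of_le {hm₀ : m₀ ≤ mΩ}
    (hind : CondIndep m₀ m₁ m₂ hm₀ μ)
    (hm₁ : m₁ ≤ mΩ) (hm₀₂ : m₀ ≤ m₂) (hm₂ : m₂ ≤ mΩ) {s : Set Ω} (hs : MeasurableSet[m₁] s) :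
    μ⟦s | m₂⟧ =ᵐ[μ] μ⟦s | m₀⟧ := by
  rw [condIndep_iff _ _ _ hm₀ hm₁ hm₂] at hind
  refine (ae_eq_condExp_of_forall_setIntegral_eq hm₂ ((integrable_const 1).indicator (hm₁ s hs))
    (fun _ _ _ ↦ integrable_condExp.integrableOn) (fun t ht _ ↦ ?_)
    (stronglyMeasurable_condExp.mono hm₀₂).aestronglyMeasurable).symm
  calc ∫ x in t, (μ⟦s | m₀⟧) x ∂μ = ∫ x, (μ⟦s | m₀⟧) x * (μ⟦t | m₀⟧) x ∂μ :=
        setIntegral_eq_integral_mul_condExp_indicator hm₀ stronglyMeasurable_condExp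
          integrable_condExp (hm₂ t ht)
    _ = ∫ x, (μ⟦s ∩ t | m₀⟧) x ∂μ := integral_congr_ae (hind s t hs ht).symm
    _ = ∫ x in t, s.indicator (fun _ ↦ (1 : ℝ)) x ∂μ := by
        rw [integral_condExp hm₀, integral_indicator (hm₁ s hs |>.inter (hm₂ t ht)),
          setIntegral_indicator (hm₁ s hs), Set.inter_comm]

theorem CondIndep.of_le_of_condExp_indicator_ae_eq {hm' : m' ≤ mΩ}
    (hind : CondIndep m' m₁ m₂ hm' μ) (hm₁ : m₁ ≤ mΩ) (hm₂ : m₂ ≤ mΩ) (hm₀ : m₀ ≤ m)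
    (hmm' : m ≤ m') (hcond : ∀ s, MeasurableSet[m₁] s → μ⟦s | m'⟧ =ᵐ[μ] μ⟦s | m₀⟧) :
    CondIndep m m₁ m₂ (hmm'.trans hm') μ := by
  rw [condIndep_iff _ _ _ hm' hm₁ hm₂] at hind
  rw [condIndep_iff _ _ _ _ hm₁ hm₂]
  intro s t hs ht
  set c := μ⟦s | m₀⟧
  have hc : StronglyMeasurable[m] c := stronglyMeasurable_condExp.mono hm₀
  have hs_m : μ⟦s | m⟧ =ᵐ[μ] c := by
    calc μ⟦s | m⟧ =ᵐ[μ] μ[μ⟦s | m'⟧ | m] := (condExp_condExp_of_le hmm' hm').symm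
      _ =ᵐ[μ] μ[c | m] := condExp_congr_ae (hcond s hs)
      _ = c := condExp_of_stronglyMeasurable (hmm'.trans hm') hc integrable_condExp
  have hst : μ⟦s ∩ t | m'⟧ =ᵐ[μ] c * μ⟦t | m'⟧ :=
    (hind s t hs ht).trans ((hcond s hs).mul Filter.EventuallyEq.rfl)
  filter_upwards [condExp_ae_eq_mul_condExp_of_le hmm' hm' hc hst, hs_m] with ω h₁ h₂
  simp only [Pi.mul_apply, h₁, h₂]

end

theorem condIndepFun_given_prognostic_score_and_arbitrary_function_general
    {Ω : Type*} {mΩ : MeasurableSpace Ω} [StandardBorelSpace Ω]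
    (μ : Measure Ω) [IsProbabilityMeasure μ]
    {k : ℕ} (X : Ω → (Fin k → ℝ)) (Y : Ω → ℝ) (R : Ω → ℝ)
    (hX : Measurable X) (hY : Measurable Y) (hR : Measurable R)
    (hunconf : CondIndepFun (MeasurableSpace.comap X inferInstance) hX.comap_le Y R μ)
    (g : (Fin k → ℝ) → ℝ) (hg : Measurable g)
    (hprog : CondIndepFun (MeasurableSpace.comap (fun ω => g (X ω)) inferInstance)
      ((hg.comp hX).comap_le) Y X μ)
    (h : (Fin k → ℝ) → ℝ) (hh : Measurable h) :
    CondIndepFun (MeasurableSpace.comap (fun ω => (g (X ω), h (X ω))) inferInstance)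
      (((hg.comp hX).prodMk (hh.comp hX)).comap_le) Y R μ :=
  CondIndep.of_le_of_condExp_indicator_ae_eq hunconf hY.comap_le hR.comap_le
    (measurable_fst.comp (comap_measurable _)).comap_le
    ((hg.prodMk hh).comp (comap_measurable X)).comap_le
    fun _ hs ↦ CondIndep.condExp_indicator_ae_eq_of_le hprog hY.comap_le
      (hg.comp (comap_measurable X)).comap_le hX.comap_le hs

/-- **Prognostic-score half of Lemma 1 (double robustness of Double Score Matching)**:
if `Y` and the sample-membership indicator `R` are conditionally independent given
`σ(X)` (unconfoundedness), and `g` is a valid prognostic score in Hansen's sense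
(`Y` and `X` are conditionally independent given `σ(g(X))`), then for every Borel
function `h`, `Y` and `R` are conditionally independent given `σ(g(X), h(X))`. -/
theorem condIndepFun_given_prognostic_score_and_arbitrary_function
    {Ω : Type*} {mΩ : MeasurableSpace Ω} [StandardBorelSpace Ω] [Nonempty Ω]
    (μ : Measure Ω) [IsProbabilityMeasure μ]
    {k : ℕ} (X : Ω → (Fin k → ℝ)) (Y : Ω → ℝ) (R : Ω → ℝ)
    (hX : Measurable X) (hY : Measurable Y) (hR : Measurable R)
    (hR01 : ∀ ω, R ω = 0 ∨ R ω = 1)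
    (hunconf : CondIndepFun (MeasurableSpace.comap X inferInstance) hX.comap_le Y R μ)
    (g : (Fin k → ℝ) → ℝ) (hg : Measurable g)
    (hprog : CondIndepFun (MeasurableSpace.comap (fun ω => g (X ω)) inferInstance)
      ((hg.comp hX).comap_le) Y X μ)
    (h : (Fin k → ℝ) → ℝ) (hh : Measurable h) :
    CondIndepFun (MeasurableSpace.comap (fun ω => (g (X ω), h (X ω))) inferInstance)
      (((hg.comp hX).prodMk (hh.comp hX)).comap_le) Y R μ :=
  condIndepFun_given_prognostic_score_and_arbitrary_function_general (mΩ := mΩ) μ X Y R hX hY hR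
    hunconf g hg hprog h hh
end

section
/- Let (Ω, 𝒜, P) be a probability space, X : Ω → ℝ^k and Y : Ω → ℝ Borel-measurable random variables, and g : ℝ^k → ℝ Borel-measurable. If Y and X are conditionally independent given the σ-algebra σ(g∘X), then for every Borel-measurable h : ℝ^k → ℝ, Y and X are conditionally independent given the enlarged σ-algebra σ(g∘X, h∘X) generated by the pair (g(X), h(X)). -/
/-!
If `m ≤ σ(X)`, then `Y ⫫ X | m` says exactly that `P(Y ∈ s | σ(X)) = P(Y ∈ s | m)` a.s. for
every measurable `s`: this is the usual characterisation of conditional independence of an event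
from a σ-algebra, via the pull-out property. By the tower property this equality persists for any
σ-algebra between `m` and `σ(X)`, and `σ(g(X)) ≤ σ(g(X), h(X)) ≤ σ(X)`.
-/

open MeasureTheory ProbabilityTheory

namespace MeasureTheory

lemma condExp_ae_eq_of_le_of_le_of_condExp_ae_eq {Ω E : Type*} [NormedAddCommGroup E]
    [NormedSpace ℝ E] [CompleteSpace E] {m₁ m₂ m₃ mΩ : MeasurableSpace Ω} {μ : Measure Ω}
    [IsFiniteMeasure μ] {f : Ω → E} (h₁₂ : m₁ ≤ m₂) (h₂₃ : m₂ ≤ m₃) (h₃ : m₃ ≤ mΩ)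
    (h : μ[f | m₃] =ᵐ[μ] μ[f | m₁]) :
    μ[f | m₂] =ᵐ[μ] μ[f | m₁] :=
  calc μ[f | m₂]
      =ᵐ[μ] μ[μ[f | m₃] | m₂] := (condExp_condExp_of_le h₂₃ h₃).symm
    _ =ᵐ[μ] μ[μ[f | m₁] | m₂] := condExp_congr_ae h
    _ = μ[f | m₁] := condExp_of_stronglyMeasurable (h₂₃.trans h₃)
        (stronglyMeasurable_condExp.mono h₁₂) integrable_condExp

end MeasureTheory

namespace ProbabilityTheory

section CondExpIndicator

variable {Ω : Type*} {m m' mΩ : MeasurableSpace Ω} {μ : Measure Ω} [IsFiniteMeasure μ]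
  {A B : Set Ω}

lemma condExp_indicator_ae_eq_mul_of_stronglyMeasurable {f : Ω → ℝ} (hf : StronglyMeasurable[m] f)
    (hfi : Integrable f μ) (hB : MeasurableSet B) :
    μ[B.indicator f | m] =ᵐ[μ] fun ω => f ω * (μ⟦B | m⟧) ω := by
  have hmul : B.indicator f = f * B.indicator fun _ => (1 : ℝ) := by
    funext ω
    by_cases hω : ω ∈ B <;> simp [hω]
  rw [hmul]
  refine condExp_mul_of_stronglyMeasurable_left hf ?_ ((integrable_const 1).indicator hB)
  exact hmul ▸ hfi.indicator hB

lemma condExp_indicator_ae_eq_of_forall_condExp_inter_ae_eq_mul (hm : m ≤ m')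
    (hm' : m' ≤ mΩ) (hA : MeasurableSet A)
    (hfac : ∀ B, MeasurableSet[m'] B →
      μ⟦A ∩ B | m⟧ =ᵐ[μ] fun ω => (μ⟦A | m⟧) ω * (μ⟦B | m⟧) ω) :
    μ⟦A | m'⟧ =ᵐ[μ] μ⟦A | m⟧ := by
  have hmΩ : m ≤ mΩ := hm.trans hm'
  refine (ae_eq_condExp_of_forall_setIntegral_eq hm' ((integrable_const 1).indicator hA)
    (fun _ _ _ => integrable_condExp.integrableOn) (fun B hB _ => ?_)
    (stronglyMeasurable_condExp.mono hm).aestronglyMeasurable).symm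
  calc ∫ ω in B, (μ⟦A | m⟧) ω ∂μ
      = ∫ ω, μ[B.indicator (μ⟦A | m⟧) | m] ω ∂μ := by
        rw [integral_condExp hmΩ, integral_indicator (hm' B hB)]
    _ = ∫ ω, (μ⟦A ∩ B | m⟧) ω ∂μ := integral_congr_ae <|
        (condExp_indicator_ae_eq_mul_of_stronglyMeasurable stronglyMeasurable_condExp
          integrable_condExp (hm' B hB)).trans (hfac B hB).symm
    _ = ∫ ω in B, A.indicator (fun _ => (1 : ℝ)) ω ∂μ := by
        rw [integral_condExp hmΩ, ← integral_indicator (hm' B hB), Set.indicator_indicator,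
          Set.inter_comm]

lemma condExp_inter_ae_eq_mul_of_condExp_indicator_ae_eq (hm : m ≤ m') (hm' : m' ≤ mΩ)
    (hA : MeasurableSet A) (heq : μ⟦A | m'⟧ =ᵐ[μ] μ⟦A | m⟧) (hB : MeasurableSet[m'] B) :
    μ⟦A ∩ B | m⟧ =ᵐ[μ] fun ω => (μ⟦A | m⟧) ω * (μ⟦B | m⟧) ω := by
  calc μ⟦A ∩ B | m⟧
      =ᵐ[μ] μ[(μ⟦A ∩ B | m'⟧) | m] := (condExp_condExp_of_le hm hm').symm
    _ =ᵐ[μ] μ[B.indicator (μ⟦A | m'⟧) | m] := by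
        refine condExp_congr_ae ?_
        rw [Set.inter_comm, ← Set.indicator_indicator]
        exact condExp_indicator ((integrable_const 1).indicator hA) hB
    _ =ᵐ[μ] μ[B.indicator (μ⟦A | m⟧) | m] := by
        refine condExp_congr_ae (heq.mono fun ω hω => ?_)
        simp only [Set.indicator, hω]
    _ =ᵐ[μ] fun ω => (μ⟦A | m⟧) ω * (μ⟦B | m⟧) ω :=
        condExp_indicator_ae_eq_mul_of_stronglyMeasurable stronglyMeasurable_condExp
          integrable_condExp (hm' B hB)

end CondExpIndicator

section CondIndepFun

variable {Ω β γ : Type*} {m m₁ m₂ mΩ : MeasurableSpace Ω} [StandardBorelSpace Ω]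
  {μ : Measure Ω} [IsFiniteMeasure μ] {mβ : MeasurableSpace β} {mγ : MeasurableSpace γ}
  {X : Ω → β} {Y : Ω → γ}

theorem condIndepFun_iff_condExp_preimage_ae_eq (hY : Measurable Y) (hX : Measurable X)
    (hmX : m ≤ mβ.comap X) {hm : m ≤ mΩ} :
    CondIndepFun m hm Y X μ ↔
      ∀ s, MeasurableSet s → μ⟦Y ⁻¹' s | mβ.comap X⟧ =ᵐ[μ] μ⟦Y ⁻¹' s | m⟧ := by
  rw [condIndepFun_iff_condExp_inter_preimage_eq_mul hY hX]
  refine ⟨fun h s hs => ?_, fun h s t hs ht => ?_⟩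
  · refine condExp_indicator_ae_eq_of_forall_condExp_inter_ae_eq_mul hmX hX.comap_le (hY hs) ?_
    rintro - ⟨t, ht, rfl⟩
    exact h s t hs ht
  · exact condExp_inter_ae_eq_mul_of_condExp_indicator_ae_eq hmX hX.comap_le (hY hs) (h s hs)
      ⟨t, ht, rfl⟩

theorem CondIndepFun.of_le_of_le_comap (hY : Measurable Y) (hX : Measurable X)
    {hm₁ : m₁ ≤ mΩ} {hm₂ : m₂ ≤ mΩ} (h : CondIndepFun m₁ hm₁ Y X μ) (h₁₂ : m₁ ≤ m₂)
    (h₂X : m₂ ≤ mβ.comap X) :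
    CondIndepFun m₂ hm₂ Y X μ := by
  rw [condIndepFun_iff_condExp_preimage_ae_eq hY hX (h₁₂.trans h₂X)] at h
  rw [condIndepFun_iff_condExp_preimage_ae_eq hY hX h₂X]
  exact fun s hs => (h s hs).trans
    (condExp_ae_eq_of_le_of_le_of_condExp_ae_eq h₁₂ h₂X hX.comap_le (h s hs)).symm

end CondIndepFun

end ProbabilityTheory

theorem condIndepFun_enlarge_by_function_of_covariates_general
    {Ω : Type*} {mΩ : MeasurableSpace Ω} [StandardBorelSpace Ω]
    (μ : Measure Ω) [IsProbabilityMeasure μ]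
    {k : ℕ} (X : Ω → (Fin k → ℝ)) (Y : Ω → ℝ)
    (hX : Measurable X) (hY : Measurable Y)
    (g : (Fin k → ℝ) → ℝ) (hg : Measurable g)
    (hgscore : CondIndepFun (MeasurableSpace.comap (fun ω => g (X ω)) inferInstance)
      ((hg.comp hX).comap_le) Y X μ)
    (h : (Fin k → ℝ) → ℝ) (hh : Measurable h) :
    CondIndepFun (MeasurableSpace.comap (fun ω => (g (X ω), h (X ω))) inferInstance)
      (((hg.comp hX).prodMk (hh.comp hX)).comap_le) Y X μ :=
  hgscore.of_le_of_le_comap hY hX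
    (measurable_fst.comp (comap_measurable fun ω => (g (X ω), h (X ω)))).comap_le
    ((hg.prodMk hh).comp (comap_measurable X)).comap_le

/-- **Coarsening/enlargement property of balance scores** (key step in the proof of
Lemma 1): if `Y` and `X` are conditionally independent given `σ(g(X))`, then for every
Borel function `h`, `Y` and `X` remain conditionally independent given the enlarged
σ-algebra `σ(g(X), h(X))`. -/
theorem condIndepFun_enlarge_by_function_of_covariates
    {Ω : Type*} {mΩ : MeasurableSpace Ω} [StandardBorelSpace Ω] [Nonempty Ω]
    (μ : Measure Ω) [IsProbabilityMeasure μ]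
    {k : ℕ} (X : Ω → (Fin k → ℝ)) (Y : Ω → ℝ)
    (hX : Measurable X) (hY : Measurable Y)
    (g : (Fin k → ℝ) → ℝ) (hg : Measurable g)
    (hgscore : CondIndepFun (MeasurableSpace.comap (fun ω => g (X ω)) inferInstance)
      ((hg.comp hX).comap_le) Y X μ)
    (h : (Fin k → ℝ) → ℝ) (hh : Measurable h) :
    CondIndepFun (MeasurableSpace.comap (fun ω => (g (X ω), h (X ω))) inferInstance)
      (((hg.comp hX).prodMk (hh.comp hX)).comap_le) Y X μ :=
  condIndepFun_enlarge_by_function_of_covariates_general (mΩ := mΩ) μ X Y hX hY g hg hgscore h hh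
end

section
/- Let A and B be nonempty finite sets, M a positive natural number, J : B → Finset A with |J(i)| = M for all i ∈ B. Let m : A ∪ B → ℝ (conditional-mean values E[y|z]), ε : A → ℝ (residuals), and y : A → ℝ with y(j) = m(j) + ε(j) for all j ∈ A. Let K(j) = |{i ∈ B : j ∈ J(i)}|, and let μ ∈ ℝ be arbitrary. Then the imputed-mean error decomposes exactly as: (1/|B|)·Σ_{i∈B}(1/M)·Σ_{j∈J(i)} y(j) − μ = [ (1/|B|)·Σ_{i∈B} m(i) − μ ] + (1/|B|)·Σ_{j∈A} (K(j)/M)·ε(j) + (1/|B|)·Σ_{i∈B}(1/M)·Σ_{j∈J(i)} ( m(j) − m(i) ). -/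
/-!
Writing `y j = m j + ε j` and `m j = m i + (m j - m i)` splits each matched mean into `m i`, a
residual average and a discrepancy average. Exchanging the order of summation in the residual
part counts each `j` once for every `i` that matched it, which produces the multiplicities `K j`.
-/

open Finset

theorem Finset.sum_sum_mem_eq_sum_card_filter_mul {α β R : Type*} [Fintype α] [Fintype β]
    [DecidableEq α] [NonAssocSemiring R] (J : β → Finset α) (f : α → R) :
    ∑ i, ∑ j ∈ J i, f j = ∑ j, ((univ.filter fun i => j ∈ J i).card : R) * f j := by
  rw [sum_comm' (t' := univ) (s' := fun j => univ.filter fun i => j ∈ J i) (by simp)]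
  simp only [sum_const, nsmul_eq_mul]

theorem Finset.one_div_card_mul_sum_sub_const {α K : Type*} [DivisionRing K] [CharZero K]
    {s : Finset α} (hs : s.Nonempty) (a : α → K) (c : K) :
    1 / (#s : K) * ∑ j ∈ s, (a j - c) = 1 / (#s : K) * ∑ j ∈ s, a j - c := by
  have hcard : (#s : K) ≠ 0 := Nat.cast_ne_zero.mpr hs.card_pos.ne'
  rw [sum_sub_distrib, sum_const, nsmul_eq_mul, mul_sub, one_div, inv_mul_cancel_left₀ hcard]

theorem Finset.one_div_card_mul_sum_add_eq {α K : Type*} [Field K] [CharZero K]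
    {s : Finset α} (hs : s.Nonempty) (a e : α → K) (c : K) :
    1 / (#s : K) * ∑ j ∈ s, (a j + e j)
      = c + 1 / (#s : K) * ∑ j ∈ s, e j + 1 / (#s : K) * ∑ j ∈ s, (a j - c) := by
  rw [one_div_card_mul_sum_sub_const hs, sum_add_distrib]
  ring

theorem dsm_error_decomposition_general
    {A B : Type*} [Fintype A] [Fintype B] [DecidableEq A]
    (M : ℕ) (hM : 0 < M) (J : B → Finset A) (hJ : ∀ i, (J i).card = M)
    (m : A ⊕ B → ℝ) (ε : A → ℝ) (y : A → ℝ)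
    (hy : ∀ j : A, y j = m (Sum.inl j) + ε j) (μ : ℝ) :
    (1 / (Fintype.card B : ℝ)) * (∑ i : B, (1 / (M : ℝ)) * ∑ j ∈ J i, y j) - μ
      = ((1 / (Fintype.card B : ℝ)) * ∑ i : B, m (Sum.inr i) - μ)
        + (1 / (Fintype.card B : ℝ)) * ∑ j : A,
            (((Finset.univ.filter fun i : B => j ∈ J i).card : ℝ) / (M : ℝ)) * ε j
        + (1 / (Fintype.card B : ℝ)) * ∑ i : B, (1 / (M : ℝ)) *
            ∑ j ∈ J i, (m (Sum.inl j) - m (Sum.inr i)) := by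
  have hmatched : ∀ i, 1 / (M : ℝ) * ∑ j ∈ J i, y j = m (Sum.inr i)
      + 1 / (M : ℝ) * ∑ j ∈ J i, ε j + 1 / (M : ℝ) * ∑ j ∈ J i, (m (Sum.inl j) - m (Sum.inr i)) := by
    intro i
    have hne : (J i).Nonempty := card_pos.mp (hJ i ▸ hM)
    simp only [hy, ← hJ i]
    exact one_div_card_mul_sum_add_eq hne _ _ _
  have hresidual : ∑ i, 1 / (M : ℝ) * ∑ j ∈ J i, ε j
      = ∑ j, ((univ.filter fun i => j ∈ J i).card : ℝ) / M * ε j := by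
    simp only [← mul_sum, sum_sum_mem_eq_sum_card_filter_mul, div_eq_inv_mul, mul_assoc, one_mul]
  simp only [hmatched, sum_add_distrib, hresidual]
  ring

/-- **Exact three-term decomposition of the DSM imputed-mean error** (equations 9–12):
score-heterogeneity term, conditional-residual term written with matching multiplicities
`K j`, and the matching-discrepancy (bias) term. Here `m` gives the conditional-mean values
`E[y|z]` on the disjoint union of the nonprobability sample `A` and the probability sample
`B`, and `ε` the residuals on `A`, with `y j = m j + ε j`. -/
theorem dsm_error_decomposition
    {A B : Type*} [Fintype A] [Fintype B] [Nonempty A] [Nonempty B] [DecidableEq A]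
    (M : ℕ) (hM : 0 < M) (J : B → Finset A) (hJ : ∀ i, (J i).card = M)
    (m : A ⊕ B → ℝ) (ε : A → ℝ) (y : A → ℝ)
    (hy : ∀ j : A, y j = m (Sum.inl j) + ε j) (μ : ℝ) :
    (1 / (Fintype.card B : ℝ)) * (∑ i : B, (1 / (M : ℝ)) * ∑ j ∈ J i, y j) - μ
      = ((1 / (Fintype.card B : ℝ)) * ∑ i : B, m (Sum.inr i) - μ)
        + (1 / (Fintype.card B : ℝ)) * ∑ j : A,
            (((Finset.univ.filter fun i : B => j ∈ J i).card : ℝ) / (M : ℝ)) * ε j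
        + (1 / (Fintype.card B : ℝ)) * ∑ i : B, (1 / (M : ℝ)) *
            ∑ j ∈ J i, (m (Sum.inl j) - m (Sum.inr i)) :=
  dsm_error_decomposition_general M hM J hJ m ε y hy μ
end

section
/- Let U_1, …, U_n be i.i.d. real-valued random variables whose common law is absolutely continuous with density f with respect to Lebesgue measure and cumulative distribution function F, and let 1 ≤ m ≤ n − 1. Then for every u ≥ 0, P( U_{(m+1)} − U_{(m)} ≤ u ) ≤ ∫_ℝ b_{nm} · f(x) · ( F(x + u) − F(x) ) dx, where U_{(m)} denotes the m-th order statistic and b_{nm} = n! / ( (m−1)! · (n−m−1)! ). -/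
open MeasureTheory ProbabilityTheory

/-- The `m`-th order statistic (0-indexed: `orderStat v m` is the `(m+1)`-th smallest
value) of the finite family `v : Fin n → ℝ`. -/
noncomputable def orderStat {n : ℕ} (v : Fin n → ℝ) (m : Fin n) : ℝ :=
  (Multiset.sort (Multiset.map v Finset.univ.val) (· ≤ ·)).get ⟨m.1, by simp⟩

/-! If the gap between the `m`-th and `(m+1)`-th order statistics is at most `u`, then some
ordered pair `i ≠ j` satisfies `U i ≤ U j ≤ U i + u`. By independence each of these `n (n - 1)`
events has probability `∫ f x (F (x + u) - F x) dx` (integrate over the smaller coordinate), so a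
union bound gives the claim, because `n (n - 1) ≤ n! / ((m - 1)! (n - m - 1)!)`. -/

theorem List.pair_getElem_sublist {α : Type*} {l : List α} {i j : ℕ} (hij : i < j)
    (hj : j < l.length) : List.Sublist [l[i], l[j]] l := by
  have hmem : l[j] ∈ l.drop (i + 1) := by
    rw [List.mem_iff_getElem]
    exact ⟨j - (i + 1), by rw [List.length_drop]; omega,
      by simp only [List.getElem_drop]; congr 1; omega⟩
  have hdrop := List.drop_sublist i l
  rw [List.drop_eq_getElem_cons (by omega)] at hdrop
  exact ((List.singleton_sublist.2 hmem).cons_cons _).trans hdrop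

theorem Multiset.exists_ne_of_cons_cons_le_map {α β : Type*} {f : α → β} {s : Multiset α}
    (hs : s.Nodup) {a b : β} (h : a ::ₘ b ::ₘ 0 ≤ s.map f) :
    ∃ x ∈ s, ∃ y ∈ s, x ≠ y ∧ f x = a ∧ f y = b := by
  classical
  obtain ⟨t, ht⟩ := Multiset.le_iff_exists_add.1 h
  rw [Multiset.cons_add, Multiset.cons_add, zero_add] at ht
  obtain ⟨x, hx, rfl, hxt⟩ := (Multiset.map_eq_cons _ _ _ _).2 ht
  obtain ⟨y, hy, rfl, -⟩ := (Multiset.map_eq_cons _ _ _ _).2 hxt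
  rw [hs.mem_erase_iff] at hy
  exact ⟨x, hx, y, hy.2, hy.1.symm, rfl, rfl⟩

theorem orderStat_mono {n : ℕ} (v : Fin n → ℝ) : Monotone (orderStat v) := by
  intro k l hkl
  rcases hkl.lt_or_eq with hlt | rfl
  · exact List.pairwise_iff_getElem.1 (Multiset.pairwise_sort _ _) _ _ (by simp) (by simp) hlt
  · exact le_rfl

theorem exists_ne_eq_orderStat_of_lt {n : ℕ} (v : Fin n → ℝ) {k l : Fin n} (hkl : k < l) :
    ∃ i j, i ≠ j ∧ v i = orderStat v k ∧ v j = orderStat v l := by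
  set L := Multiset.sort (Multiset.map v Finset.univ.val) (· ≤ ·)
  have hsub : orderStat v k ::ₘ orderStat v l ::ₘ 0 ≤ Multiset.map v Finset.univ.val := by
    rw [← Multiset.sort_eq (Multiset.map v Finset.univ.val) (· ≤ ·)]
    exact Multiset.coe_le.2 (List.pair_getElem_sublist (l := L) hkl (by simp [L])).subperm
  obtain ⟨i, -, j, -, hij, hi, hj⟩ := Multiset.exists_ne_of_cons_cons_le_map Finset.univ.nodup hsub
  exact ⟨i, j, hij, hi, hj⟩

theorem exists_ne_le_le_add_of_orderStat_sub_le {n : ℕ} (v : Fin n → ℝ) {k l : Fin n}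
    (hkl : k < l) {u : ℝ} (hu : orderStat v l - orderStat v k ≤ u) :
    ∃ i j, i ≠ j ∧ v i ≤ v j ∧ v j ≤ v i + u := by
  obtain ⟨i, j, hij, hi, hj⟩ := exists_ne_eq_orderStat_of_lt v hkl
  refine ⟨i, j, hij, ?_, ?_⟩
  · simpa only [hi, hj] using orderStat_mono v hkl.le
  · linarith

theorem measurableSet_setOf_le_le_add (u : ℝ) :
    MeasurableSet {p : ℝ × ℝ | p.1 ≤ p.2 ∧ p.2 ≤ p.1 + u} :=
  (measurableSet_le measurable_fst measurable_snd).inter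
    (measurableSet_le measurable_snd (measurable_fst.add_const u))

theorem measure_exists_ne_pair_mem_le {Ω ι α : Type*} [MeasurableSpace Ω] [MeasurableSpace α]
    [Fintype ι] {μ : Measure Ω} [IsFiniteMeasure μ] {ν : Measure α} {X : ι → Ω → α}
    (hX : ∀ i, Measurable (X i)) (hindep : Pairwise fun i j => IndepFun (X i) (X j) μ)
    (hlaw : ∀ i, μ.map (X i) = ν) {S : Set (α × α)} (hS : MeasurableSet S) :
    μ {ω | ∃ i j, i ≠ j ∧ (X i ω, X j ω) ∈ S}
      ≤ (Fintype.card ι * (Fintype.card ι - 1) : ℕ) * ν.prod ν S := by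
  have hpair : ∀ p ∈ (Finset.univ.offDiag : Finset (ι × ι)),
      μ ((fun ω => (X p.1 ω, X p.2 ω)) ⁻¹' S) = ν.prod ν S := by
    rintro ⟨i, j⟩ hij
    have hmap := (indepFun_iff_map_prod_eq_prod_map_map (hX i).aemeasurable
      (hX j).aemeasurable).1 (hindep (Finset.mem_offDiag.1 hij).2.2)
    rw [← Measure.map_apply ((hX i).prodMk (hX j)) hS, hmap, hlaw, hlaw]
  calc μ {ω | ∃ i j, i ≠ j ∧ (X i ω, X j ω) ∈ S}
      ≤ μ (⋃ p ∈ (Finset.univ.offDiag : Finset (ι × ι)), (fun ω => (X p.1 ω, X p.2 ω)) ⁻¹' S) :=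
        measure_mono fun ω ⟨i, j, hij, hω⟩ => Set.mem_biUnion (x := (i, j)) (by simpa) hω
    _ ≤ ∑ p ∈ (Finset.univ.offDiag : Finset (ι × ι)), μ ((fun ω => (X p.1 ω, X p.2 ω)) ⁻¹' S) :=
        measure_biUnion_finset_le _ _
    _ = (Fintype.card ι * (Fintype.card ι - 1) : ℕ) * ν.prod ν S := by
        rw [Finset.sum_congr rfl hpair, Finset.sum_const, Finset.offDiag_card, nsmul_eq_mul,
          Nat.mul_sub_one, Finset.card_univ]

theorem toReal_measure_prod_setOf_le_le_add {ν : Measure ℝ} [IsProbabilityMeasure ν]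
    [NullSingletonClass ν] {u : ℝ} (hu : 0 ≤ u) :
    ((ν.prod ν) {p | p.1 ≤ p.2 ∧ p.2 ≤ p.1 + u}).toReal = ∫ x, (cdf ν (x + u) - cdf ν x) ∂ν := by
  have hsection : ∀ x, ν (Set.Icc x (x + u)) = ENNReal.ofReal (cdf ν (x + u) - cdf ν x) := by
    intro x
    have h := (cdf ν).measure_Ioc x (x + u)
    rwa [measure_cdf, measure_congr Ioc_ae_eq_Icc] at h
  have hmeas : Measurable fun x => cdf ν (x + u) - cdf ν x :=
    ((cdf ν).mono.measurable.comp (measurable_add_const u)).sub (cdf ν).mono.measurable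
  rw [Measure.prod_apply (measurableSet_setOf_le_le_add u), integral_eq_lintegral_of_nonneg_ae
    (ae_of_all _ fun x => sub_nonneg.2 ((cdf ν).mono (by linarith))) hmeas.aestronglyMeasurable]
  exact congrArg ENNReal.toReal (lintegral_congr fun x => hsection x)

theorem integral_withDensity_ofReal {α : Type*} [MeasurableSpace α] {μ : Measure α} {f : α → ℝ}
    (hf : Measurable f) (hf0 : ∀ x, 0 ≤ f x) (g : α → ℝ) :
    ∫ x, g x ∂μ.withDensity (fun x => ENNReal.ofReal (f x)) = ∫ x, f x * g x ∂μ := by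
  rw [integral_withDensity_eq_integral_toReal_smul hf.ennreal_ofReal
    (ae_of_all _ fun _ => ENNReal.ofReal_lt_top)]
  simp_rw [ENNReal.toReal_ofReal (hf0 _), smul_eq_mul]

theorem cdf_withDensity_ofReal {μ : Measure ℝ} {f : ℝ → ℝ} (hf : Measurable f) (hf0 : ∀ x, 0 ≤ f x)
    [IsProbabilityMeasure (μ.withDensity fun x => ENNReal.ofReal (f x))] (x : ℝ) :
    cdf (μ.withDensity fun x => ENNReal.ofReal (f x)) x = ∫ t in Set.Iic x, f t ∂μ := by
  rw [cdf_eq_real, measureReal_def, withDensity_apply _ measurableSet_Iic,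
    integral_eq_lintegral_of_nonneg_ae (ae_of_all _ hf0) hf.aestronglyMeasurable]

theorem mul_pred_le_factorial_div_factorial_mul_factorial {n a b : ℕ} (h : a + b + 2 = n) :
    ((n * (n - 1) : ℕ) : ℝ) ≤ (n.factorial : ℝ) / (a.factorial * b.factorial) := by
  rw [le_div_iff₀ (by positivity)]
  norm_cast
  subst h
  have hsplit : (a + b + 2).factorial = (a + b + 2) * (a + b + 1) * (a + b).factorial := by
    simp only [Nat.factorial_succ]; ring
  rw [hsplit, show a + b + 2 - 1 = a + b + 1 by omega]
  exact Nat.mul_le_mul_left _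
    (Nat.le_of_dvd (Nat.factorial_pos _) (Nat.factorial_mul_factorial_dvd_factorial_add a b))

/-- **Result 1 of the appendix**: if `U_1, …, U_n` are i.i.d. with density `f` and CDF
`F`, and `1 ≤ m ≤ n − 1`, then for every `u ≥ 0` the distribution function of the gap
between consecutive order statistics is bounded:
`P(U_{(m+1)} − U_{(m)} ≤ u) ≤ ∫ b_{nm} f(x) (F(x + u) − F(x)) dx`,
where `b_{nm} = n! / ((m−1)! (n−m−1)!)`. -/
theorem gap_consecutive_order_statistics_cdf_le
    {Ω : Type*} [MeasurableSpace Ω] (μ : Measure Ω) [IsProbabilityMeasure μ]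
    (n m : ℕ) (hm1 : 1 ≤ m) (hmn : m ≤ n - 1)
    (U : Fin n → Ω → ℝ) (hUmeas : ∀ i, Measurable (U i))
    (hindep : iIndepFun U μ)
    (f : ℝ → ℝ) (hfmeas : Measurable f) (hfnonneg : ∀ x, 0 ≤ f x)
    (hlaw : ∀ i, Measure.map (U i) μ
      = (volume : Measure ℝ).withDensity fun x => ENNReal.ofReal (f x))
    (F : ℝ → ℝ) (hF : F = fun x => ∫ t in Set.Iic x, f t) :
    ∀ u : ℝ, 0 ≤ u →
      (μ {ω | orderStat (fun i => U i ω) ⟨m, by omega⟩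
          - orderStat (fun i => U i ω) ⟨m - 1, by omega⟩ ≤ u}).toReal
        ≤ ∫ x : ℝ, (n.factorial : ℝ) / ((m - 1).factorial * (n - m - 1).factorial)
            * f x * (F (x + u) - F x) := by
  intro u hu
  set ν : Measure ℝ := volume.withDensity fun x => ENNReal.ofReal (f x)
  have : IsProbabilityMeasure ν :=
    hlaw ⟨0, by omega⟩ ▸ Measure.isProbabilityMeasure_map (hUmeas _).aemeasurable
  have hFcdf : ∀ x, F x = cdf ν x := fun x => by rw [hF, cdf_withDensity_ofReal hfmeas hfnonneg]
  set S : Set (ℝ × ℝ) := {p | p.1 ≤ p.2 ∧ p.2 ≤ p.1 + u}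
  have hgap : {ω | orderStat (fun i => U i ω) ⟨m, by omega⟩
      - orderStat (fun i => U i ω) ⟨m - 1, by omega⟩ ≤ u}
      ⊆ {ω | ∃ i j, i ≠ j ∧ (U i ω, U j ω) ∈ S} := fun ω hω =>
    exists_ne_le_le_add_of_orderStat_sub_le (fun i => U i ω) (Fin.mk_lt_mk.2 (by omega)) hω
  have hpair := measure_exists_ne_pair_mem_le hUmeas (fun i j hij => hindep.indepFun hij) hlaw
    (measurableSet_setOf_le_le_add u)
  rw [Fintype.card_fin] at hpair
  calc _ ≤ (((n * (n - 1) : ℕ) : ENNReal) * ν.prod ν S).toReal :=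
        ENNReal.toReal_mono (ENNReal.mul_ne_top (ENNReal.natCast_ne_top _) (measure_ne_top _ _))
          ((measure_mono hgap).trans hpair)
    _ ≤ (n.factorial : ℝ) / ((m - 1).factorial * (n - m - 1).factorial) * (ν.prod ν S).toReal := by
        rw [ENNReal.toReal_mul, ENNReal.toReal_natCast]
        exact mul_le_mul_of_nonneg_right
          (mul_pred_le_factorial_div_factorial_mul_factorial (by omega)) ENNReal.toReal_nonneg
    _ = _ := by
        rw [toReal_measure_prod_setOf_le_le_add hu, integral_withDensity_ofReal hfmeas hfnonneg,
          ← integral_const_mul]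
        simp_rw [hFcdf, mul_assoc]
end
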